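/- arXiv:1912.00645 — 10 statements merged into one kernel-verified Lean document; each statement's English description precedes it below -/
import Mathlib

section
/- Let μ0 be a full-support probability on ℕ* and let (μ_Δ)_{Δ∈ℕ} be the Cond-int family associated to μ0. Suppose there exists α > 0 such that for every t ≥ 1, μ0(t) ≥ α · ∑_{s≥t} μ0(s) (Condition conv2). Then for every Δ ∈ ℕ and every t ≥ 1, μ_Δ(t) ≥ α · ∑_{s≥t} μ_Δ(s) (Condition conv holds for the family with the same constant α). -/
open scoped BigOperators

/-- The Cond-int family associated to a full-support probability `μ0` on `ℕ*`:
`μ_Δ(t) = √(μ0(t)·μ0(t+Δ)) / ∑_{s≥1} √(μ0(s)·μ0(s+Δ))`. -/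
noncomputable def condInt (μ0 : ℕ → ℝ) (Δ t : ℕ) : ℝ :=
  Real.sqrt (μ0 t * μ0 (t + Δ)) / ∑' s : ℕ, Real.sqrt (μ0 (s + 1) * μ0 (s + 1 + Δ))

lemma sqrt_mul_le_half {a b : ℝ} (ha : 0 ≤ a) (hb : 0 ≤ b) :
    Real.sqrt (a * b) ≤ (a + b) / 2 := by
  nlinarith [Real.sq_sqrt ha, Real.sq_sqrt hb, Real.sqrt_mul ha b,
    sq_nonneg (Real.sqrt a - Real.sqrt b), Real.sqrt_nonneg a, Real.sqrt_nonneg b]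

/-- If `μ0` satisfies Cond-conv2 with constant `α`, then the Cond-int family
satisfies Cond-conv with the same constant `α`. -/
theorem stmt_0 (μ0 : ℕ → ℝ) (h0 : μ0 0 = 0) (hpos : ∀ i, 1 ≤ i → 0 < μ0 i)
    (hsum : HasSum (fun i : ℕ => μ0 (i + 1)) 1)
    (α : ℝ) (hα : 0 < α)
    (hconv2 : ∀ t : ℕ, 1 ≤ t → α * ∑' s : ℕ, μ0 (t + s) ≤ μ0 t) :
    ∀ Δ : ℕ, ∀ t : ℕ, 1 ≤ t →
      α * ∑' s : ℕ, condInt μ0 Δ (t + s) ≤ condInt μ0 Δ t := by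
  have hnn : ∀ i, 0 ≤ μ0 i := by
    intro i
    cases i with
    | zero => simp [h0]
    | succ n => exact (hpos _ (Nat.succ_le_succ (Nat.zero_le _))).le
  have hsummable : Summable μ0 := (summable_nat_add_iff 1).mp hsum.summable
  have hshift : ∀ k : ℕ, Summable (fun s : ℕ => μ0 (k + s)) := by
    intro k
    have := (summable_nat_add_iff k).mpr hsummable
    simpa [add_comm] using this
  -- summability of sqrt products
  have hsqrt_summable : ∀ a b : ℕ,
      Summable (fun s : ℕ => Real.sqrt (μ0 (a + s) * μ0 (b + s))) := by
    intro a b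
    apply Summable.of_nonneg_of_le (fun s => Real.sqrt_nonneg _)
      (fun s => sqrt_mul_le_half (hnn _) (hnn _))
    exact ((hshift a).add (hshift b)).div_const 2
  intro Δ t ht
  -- the normalizer
  set Z := ∑' s : ℕ, Real.sqrt (μ0 (s + 1) * μ0 (s + 1 + Δ)) with hZ
  have hZsummable : Summable (fun s : ℕ => Real.sqrt (μ0 (s + 1) * μ0 (s + 1 + Δ))) := by
    have := hsqrt_summable 1 (1 + Δ)
    simpa [add_comm, add_left_comm, add_assoc] using this
  have hZpos : 0 < Z := by
    refine Summable.tsum_pos hZsummable (fun s => Real.sqrt_nonneg _) 0 ?_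
    exact Real.sqrt_pos.mpr (mul_pos (hpos 1 le_rfl) (hpos (1 + Δ) (Nat.le_add_right _ _)))
  -- tail bounds
  have hA : α * ∑' s : ℕ, μ0 (t + s) ≤ μ0 t := hconv2 t ht
  have hB : α * ∑' s : ℕ, μ0 (t + Δ + s) ≤ μ0 (t + Δ) :=
    hconv2 (t + Δ) (le_trans ht (Nat.le_add_right _ _))
  -- Cauchy-Schwarz
  have hfg : Summable (fun s : ℕ => Real.sqrt (μ0 (t + s) * μ0 (t + s + Δ))) := by
    have := hsqrt_summable t (t + Δ)
    simpa [add_comm, add_left_comm, add_assoc] using this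
  set A := ∑' s : ℕ, μ0 (t + s) with hAdef
  set B := ∑' s : ℕ, μ0 (t + Δ + s) with hBdef
  have hAnn : 0 ≤ A := tsum_nonneg fun s => hnn _
  have hBnn : 0 ≤ B := tsum_nonneg fun s => hnn _
  have hCS : ∑' s : ℕ, Real.sqrt (μ0 (t + s) * μ0 (t + s + Δ)) ≤
      Real.sqrt A * Real.sqrt B := by
    refine Summable.tsum_le_of_sum_le hfg ?_
    intro F
    have h1 : ∀ s : ℕ, Real.sqrt (μ0 (t + s) * μ0 (t + s + Δ)) =
        Real.sqrt (μ0 (t + s)) * Real.sqrt (μ0 (t + s + Δ)) := by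
      intro s; exact Real.sqrt_mul (hnn _) _
    calc ∑ s ∈ F, Real.sqrt (μ0 (t + s) * μ0 (t + s + Δ))
        = ∑ s ∈ F, Real.sqrt (μ0 (t + s)) * Real.sqrt (μ0 (t + s + Δ)) := by
          simp_rw [h1]
      _ ≤ Real.sqrt (∑ s ∈ F, Real.sqrt (μ0 (t + s)) ^ 2) *
          Real.sqrt (∑ s ∈ F, Real.sqrt (μ0 (t + s + Δ)) ^ 2) := by
          have := Finset.sum_mul_sq_le_sq_mul_sq F
            (fun s => Real.sqrt (μ0 (t + s))) (fun s => Real.sqrt (μ0 (t + s + Δ)))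
          have hnn' : 0 ≤ ∑ s ∈ F, Real.sqrt (μ0 (t + s)) * Real.sqrt (μ0 (t + s + Δ)) :=
            Finset.sum_nonneg fun s _ => mul_nonneg (Real.sqrt_nonneg _) (Real.sqrt_nonneg _)
          calc ∑ s ∈ F, Real.sqrt (μ0 (t + s)) * Real.sqrt (μ0 (t + s + Δ))
              = Real.sqrt ((∑ s ∈ F, Real.sqrt (μ0 (t + s)) * Real.sqrt (μ0 (t + s + Δ))) ^ 2) := by
                rw [Real.sqrt_sq hnn']
            _ ≤ Real.sqrt ((∑ s ∈ F, Real.sqrt (μ0 (t + s)) ^ 2) *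
                (∑ s ∈ F, Real.sqrt (μ0 (t + s + Δ)) ^ 2)) := Real.sqrt_le_sqrt this
            _ = _ := Real.sqrt_mul (Finset.sum_nonneg fun s _ => sq_nonneg _) _
      _ ≤ Real.sqrt A * Real.sqrt B := by
          have e1 : ∀ s : ℕ, Real.sqrt (μ0 (t + s)) ^ 2 = μ0 (t + s) :=
            fun s => Real.sq_sqrt (hnn _)
          have e2 : ∀ s : ℕ, Real.sqrt (μ0 (t + s + Δ)) ^ 2 = μ0 (t + Δ + s) := by
            intro s; rw [Real.sq_sqrt (hnn _)]; ring_nf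
          simp_rw [e1, e2]
          refine mul_le_mul (Real.sqrt_le_sqrt ?_) (Real.sqrt_le_sqrt ?_)
            (Real.sqrt_nonneg _) (Real.sqrt_nonneg _)
          · exact Summable.sum_le_tsum F (fun s _ => hnn _) (hshift t)
          · exact Summable.sum_le_tsum F (fun s _ => hnn _) (hshift (t + Δ))
  -- combine
  have key : α * ∑' s : ℕ, Real.sqrt (μ0 (t + s) * μ0 (t + s + Δ)) ≤
      Real.sqrt (μ0 t * μ0 (t + Δ)) := by
    have h1 : Real.sqrt A * Real.sqrt B ≤ Real.sqrt (μ0 t / α) * Real.sqrt (μ0 (t + Δ) / α) := by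
      refine mul_le_mul (Real.sqrt_le_sqrt ?_) (Real.sqrt_le_sqrt ?_)
        (Real.sqrt_nonneg _) (Real.sqrt_nonneg _)
      · rw [le_div_iff₀ hα, mul_comm]; exact hA
      · rw [le_div_iff₀ hα, mul_comm]; exact hB
    have h2 : Real.sqrt (μ0 t / α) * Real.sqrt (μ0 (t + Δ) / α) =
        Real.sqrt (μ0 t * μ0 (t + Δ)) / α := by
      rw [← Real.sqrt_mul (div_nonneg (hnn _) hα.le)]
      rw [div_mul_div_comm, ← sq α, Real.sqrt_div (mul_nonneg (hnn _) (hnn _)),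
        Real.sqrt_sq hα.le]
    calc α * ∑' s : ℕ, Real.sqrt (μ0 (t + s) * μ0 (t + s + Δ))
        ≤ α * (Real.sqrt A * Real.sqrt B) := by
          exact mul_le_mul_of_nonneg_left hCS hα.le
      _ ≤ α * (Real.sqrt (μ0 t * μ0 (t + Δ)) / α) := by
          refine mul_le_mul_of_nonneg_left ?_ hα.le
          rw [← h2]; exact h1
      _ = Real.sqrt (μ0 t * μ0 (t + Δ)) := by
          field_simp
  -- finish
  unfold condInt
  rw [← hZ, tsum_div_const, ← mul_div_assoc]
  exact (div_le_div_iff_of_pos_right hZpos).mpr key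
end

section
/- Let μ0 be a full-support probability on ℕ* with ∑_{v≥1} √(μ0(v)) < ∞, let (μ_Δ)_{Δ∈ℕ} be the Cond-int family, and define T_μ(s,t;u) = μ_{|t−s|}(u − max(s,t)) if u > max(s,t) and T_μ(s,t;u) = 0 otherwise, for s,t,u ∈ ℤ. Define the kernels M⁻(s;u) = √(μ0(u−s)) / ∑_{v≥1} √(μ0(v)) if u > s (and 0 otherwise) and M⁺(u;t) = √(μ0(u−t)) / ∑_{v≥1} √(μ0(v)) if u > t (and 0 otherwise). Then for all s, t, u ∈ ℤ: (∑_{w∈ℤ} M⁻(s;w)·M⁺(w;t)) · T_μ(s,t;u) = M⁻(s;u) · M⁺(u;t). -/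
open scoped BigOperators

/-- The PCA transition `T_μ(s,t;u) = μ_{|t−s|}(u − max(s,t))` for `u > max(s,t)`, else `0`. -/
noncomputable def Tmu (μ0 : ℕ → ℝ) (s t u : ℤ) : ℝ :=
  if max s t < u then condInt μ0 (t - s).natAbs (u - max s t).toNat else 0

/-- The kernel `M⁻(s;u) = √(μ0(u−s)) / ∑_{v≥1} √(μ0(v))` for `u > s`, else `0`. -/
noncomputable def Mminus (μ0 : ℕ → ℝ) (s u : ℤ) : ℝ :=
  if s < u then Real.sqrt (μ0 (u - s).toNat) / ∑' v : ℕ, Real.sqrt (μ0 (v + 1)) else 0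

/-- The kernel `M⁺(u;t) = √(μ0(u−t)) / ∑_{v≥1} √(μ0(v))` for `u > t`, else `0`. -/
noncomputable def Mplus (μ0 : ℕ → ℝ) (u t : ℤ) : ℝ :=
  if t < u then Real.sqrt (μ0 (u - t).toNat) / ∑' v : ℕ, Real.sqrt (μ0 (v + 1)) else 0

section aux


variable (μ0 : ℕ → ℝ)

lemma aux_le_one (h0 : μ0 0 = 0) (hpos : ∀ i, 1 ≤ i → 0 < μ0 i)
    (hsum : HasSum (fun i : ℕ => μ0 (i + 1)) 1) : ∀ n, μ0 n ≤ 1 := by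
  intro n
  match n with
  | 0 => simp [h0]
  | (m+1) =>
    exact le_hasSum hsum m (fun i _ => (hpos (i+1) (by omega)).le)

lemma aux_summable (h0 : μ0 0 = 0) (hpos : ∀ i, 1 ≤ i → 0 < μ0 i)
    (hsum : HasSum (fun i : ℕ => μ0 (i + 1)) 1)
    (hsqrt : Summable (fun v : ℕ => Real.sqrt (μ0 (v + 1)))) (Δ : ℕ) :
    Summable (fun n : ℕ => Real.sqrt (μ0 (n + 1) * μ0 (n + 1 + Δ))) := by
  apply Summable.of_nonneg_of_le (fun n => Real.sqrt_nonneg _) _ hsqrt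
  intro n
  rw [Real.sqrt_mul (hpos (n+1) (by omega)).le]
  calc Real.sqrt (μ0 (n+1)) * Real.sqrt (μ0 (n+1+Δ))
      ≤ Real.sqrt (μ0 (n+1)) * 1 := by
        apply mul_le_mul_of_nonneg_left _ (Real.sqrt_nonneg _)
        rw [show (1:ℝ) = Real.sqrt 1 by simp]
        exact Real.sqrt_le_sqrt (aux_le_one μ0 h0 hpos hsum _)
    _ = Real.sqrt (μ0 (n+1)) := mul_one _

end aux

/-- The integrability relation `(M⁻M⁺)(s;t) · T_μ(s,t;u) = M⁻(s;u) · M⁺(u;t)`. -/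
theorem stmt_2 (μ0 : ℕ → ℝ) (h0 : μ0 0 = 0) (hpos : ∀ i, 1 ≤ i → 0 < μ0 i)
    (hsum : HasSum (fun i : ℕ => μ0 (i + 1)) 1)
    (hsqrt : Summable (fun v : ℕ => Real.sqrt (μ0 (v + 1))))
    (s t u : ℤ) :
    (∑' w : ℤ, Mminus μ0 s w * Mplus μ0 w t) * Tmu μ0 s t u
      = Mminus μ0 s u * Mplus μ0 u t := by
  -- reduce to the case s ≤ t using symmetry
  have symm_key : ∀ s t : ℤ, s ≤ t →
      (∑' w : ℤ, Mminus μ0 s w * Mplus μ0 w t) * Tmu μ0 s t u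
        = Mminus μ0 s u * Mplus μ0 u t := by
    intro s t hst
    set Z : ℝ := ∑' v : ℕ, Real.sqrt (μ0 (v + 1)) with hZ
    have hZpos : 0 < Z := by
      refine Summable.tsum_pos hsqrt (fun n => Real.sqrt_nonneg _) 0 ?_
      exact Real.sqrt_pos.2 (hpos 1 le_rfl)
    set Δ : ℕ := (t - s).natAbs with hΔ
    set D : ℝ := ∑' n : ℕ, Real.sqrt (μ0 (n + 1) * μ0 (n + 1 + Δ)) with hD
    have hDsum := aux_summable μ0 h0 hpos hsum hsqrt Δ
    have hDpos : 0 < D := by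
      refine Summable.tsum_pos hDsum (fun n => Real.sqrt_nonneg _) 0 ?_
      exact Real.sqrt_pos.2 (mul_pos (hpos 1 le_rfl) (hpos (1+Δ) (by omega)))
    have hmax : max s t = t := max_eq_right hst
    -- the tsum over ℤ
    have hts : (∑' w : ℤ, Mminus μ0 s w * Mplus μ0 w t) = D / Z ^ 2 := by
      have hinj : Function.Injective (fun n : ℕ => t + 1 + (n : ℤ)) := by
        intro a b hab; simpa using hab
      have hsupp : Function.support (fun w : ℤ => Mminus μ0 s w * Mplus μ0 w t)
          ⊆ Set.range (fun n : ℕ => t + 1 + (n : ℤ)) := by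
        intro w hw
        simp only [Function.mem_support, Mminus, Mplus] at hw
        have htw : t < w := by
          by_contra h
          rw [if_neg h] at hw; simp at hw
        refine ⟨(w - t - 1).toNat, ?_⟩
        show t + 1 + ((w - t - 1).toNat : ℤ) = w
        omega
      rw [← hinj.tsum_eq hsupp]
      have heq : ∀ n : ℕ, Mminus μ0 s (t + 1 + (n : ℤ)) * Mplus μ0 (t + 1 + (n : ℤ)) t
          = Real.sqrt (μ0 (n + 1) * μ0 (n + 1 + Δ)) / Z ^ 2 := by
        intro n
        have h1 : s < t + 1 + (n : ℤ) := by omega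
        have h2 : t < t + 1 + (n : ℤ) := by omega
        rw [Mminus, Mplus, if_pos h1, if_pos h2, ← hZ]
        have e1 : (t + 1 + (n : ℤ) - s).toNat = n + 1 + Δ := by omega
        have e2 : (t + 1 + (n : ℤ) - t).toNat = n + 1 := by omega
        rw [e1, e2, div_mul_div_comm, ← Real.sqrt_mul (hpos (n+1+Δ) (by omega)).le,
          mul_comm (μ0 (n+1+Δ)), sq]
      simp only [heq]
      exact tsum_div_const
    rw [hts]
    by_cases hu : t < u
    · -- u > max s t
      have hku : 1 ≤ (u - t).toNat := by omega
      rw [Tmu, hmax, if_pos hu, condInt, Mminus, Mplus, if_pos (by omega : s < u), if_pos hu,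
        ← hZ, ← hΔ]
      have e1 : (u - s).toNat = (u - t).toNat + Δ := by omega
      set k : ℕ := (u - t).toNat with hk
      have e2 : Real.sqrt (μ0 (u - s).toNat) * Real.sqrt (μ0 k)
          = Real.sqrt (μ0 k * μ0 (k + Δ)) := by
        rw [e1, ← Real.sqrt_mul (hpos (k+Δ) (by omega)).le, mul_comm]
      rw [← hD]
      field_simp
      rw [← e2]
    · -- u ≤ max s t : both sides zero
      rw [Tmu, hmax, if_neg hu, mul_zero]
      rw [Mplus, if_neg hu, mul_zero]
  by_cases hst : s ≤ t
  · exact symm_key s t hst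
  · have h := symm_key t s (by omega)
    have hM : ∀ a b : ℤ, Mminus μ0 a b = Mplus μ0 b a := by
      intro a b; rw [Mminus, Mplus]
    have hT : Tmu μ0 s t u = Tmu μ0 t s u := by
      have hab : (t - s).natAbs = (s - t).natAbs := by omega
      rw [Tmu, Tmu, max_comm, hab]
    have hS : (∑' w : ℤ, Mminus μ0 s w * Mplus μ0 w t)
        = ∑' w : ℤ, Mminus μ0 t w * Mplus μ0 w s := by
      congr 1; funext w; rw [hM s w, hM t w]; ring
    rw [hS, hT, h, hM s u, hM t u]; ring
end

section
/- Let μ0 be a full-support probability on ℕ*, let (μ_Δ)_{Δ∈ℕ} be the Cond-int family, and define T_μ(s,t;u) = μ_{|t−s|}(u − max(s,t)) if u > max(s,t) and 0 otherwise, for s,t,u ∈ ℤ. Let α > 0 be such that ∑_{v≥1} √(μ0(v))·α^v < ∞ and ∑_{v≥1} √(μ0(v))·α^{−v} < ∞, and define M⁻_α(s;u) = √(μ0(u−s))·α^{u−s} / ∑_{v≥1} √(μ0(v))·α^v if u > s (and 0 otherwise) and M⁺_α(u;t) = √(μ0(u−t))·α^{−(u−t)} / ∑_{v≥1} √(μ0(v))·α^{−v}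 if u > t (and 0 otherwise). Then for all s, t, u ∈ ℤ: (∑_{w∈ℤ} M⁻_α(s;w)·M⁺_α(w;t)) · T_μ(s,t;u) = M⁻_α(s;u) · M⁺_α(u;t). -/
/-!
For `w > max s t` the tilts combine as `α ^ (w - s) * α⁻¹ ^ (w - t) = α ^ (t - s)`, so
`M⁻_α(s;w) M⁺_α(w;t)` is a constant `C` independent of `w` times `√(μ0 n · μ0 (n + Δ))`, where
`n = w - max s t` and `Δ = |t - s|`, and it vanishes for `w ≤ max s t`. Summing over `w` gives
`C` times the (positive) normaliser of `μ_Δ`, and multiplying by `T_μ(s,t;u) = μ_Δ(n)` cancels it.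
-/

open scoped BigOperators

/-- The tilted kernel `M⁻_α(s;u) = √(μ0(u−s))·α^{u−s} / ∑_{v≥1} √(μ0(v))·α^v`
for `u > s`, else `0`. -/
noncomputable def MminusA (μ0 : ℕ → ℝ) (α : ℝ) (s u : ℤ) : ℝ :=
  if s < u then
    Real.sqrt (μ0 (u - s).toNat) * α ^ (u - s).toNat
      / ∑' v : ℕ, Real.sqrt (μ0 (v + 1)) * α ^ (v + 1)
  else 0

/-- The tilted kernel `M⁺_α(u;t) = √(μ0(u−t))·α^{−(u−t)} / ∑_{v≥1} √(μ0(v))·α^{−v}`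
for `u > t`, else `0`. -/
noncomputable def MplusA (μ0 : ℕ → ℝ) (α : ℝ) (u t : ℤ) : ℝ :=
  if t < u then
    Real.sqrt (μ0 (u - t).toNat) * α⁻¹ ^ (u - t).toNat
      / ∑' v : ℕ, Real.sqrt (μ0 (v + 1)) * α⁻¹ ^ (v + 1)
  else 0

lemma sqrt_mul_le_add {x y : ℝ} (hx : 0 ≤ x) (hy : 0 ≤ y) : √(x * y) ≤ x + y :=
  Real.sqrt_le_iff.mpr ⟨add_nonneg hx hy, by nlinarith⟩

lemma summable_sqrt_mul_shift {f : ℕ → ℝ} (hnn : ∀ i, 0 ≤ f i) (hf : Summable f) (Δ : ℕ) :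
    Summable fun k => √(f k * f (k + Δ)) :=
  .of_nonneg_of_le (fun _ => Real.sqrt_nonneg _) (fun k => sqrt_mul_le_add (hnn k) (hnn _))
    (hf.add ((summable_nat_add_iff Δ).mpr hf))

lemma pow_toNat_mul_inv_pow_toNat {α : ℝ} (hα : α ≠ 0) {s t w : ℤ} (hs : s ≤ w) (ht : t ≤ w) :
    α ^ (w - s).toNat * α⁻¹ ^ (w - t).toNat = α ^ (t - s) := by
  rw [inv_pow, ← zpow_natCast, ← zpow_natCast, ← zpow_neg, ← zpow_add₀ hα,
    Int.toNat_of_nonneg (by omega), Int.toNat_of_nonneg (by omega)]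
  ring_nf

lemma MminusA_mul_MplusA_of_le (μ0 : ℕ → ℝ) (α : ℝ) {s t w : ℤ} (hw : w ≤ max s t) :
    MminusA μ0 α s w * MplusA μ0 α w t = 0 := by
  rcases le_max_iff.mp hw with h | h
  · rw [MminusA, if_neg h.not_gt, zero_mul]
  · rw [MplusA, if_neg h.not_gt, mul_zero]

lemma MminusA_mul_MplusA_of_max_lt (μ0 : ℕ → ℝ) {α : ℝ} (hα : α ≠ 0) {s t w : ℤ}
    (hw : max s t < w) :
    MminusA μ0 α s w * MplusA μ0 α w t
      = α ^ (t - s) / ((∑' v : ℕ, √(μ0 (v + 1)) * α ^ (v + 1)) *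
          ∑' v : ℕ, √(μ0 (v + 1)) * α⁻¹ ^ (v + 1)) *
        (√(μ0 (w - s).toNat) * √(μ0 (w - t).toNat)) := by
  rw [max_lt_iff] at hw
  rw [MminusA, MplusA, if_pos hw.1, if_pos hw.2, ← pow_toNat_mul_inv_pow_toNat hα hw.1.le hw.2.le]
  ring

lemma sqrt_toNat_sub_mul_sqrt_toNat_sub (f : ℕ → ℝ) {s t w : ℤ} (hw : max s t < w) :
    √(f (w - s).toNat) * √(f (w - t).toNat)
      = √(f (w - max s t).toNat) * √(f ((w - max s t).toNat + (t - s).natAbs)) := by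
  rcases le_total s t with h | h
  · rw [max_eq_right h, mul_comm]
    congr 3; omega
  · rw [max_eq_left h]
    congr 3; omega

lemma tsum_int_eq_tsum_nat_of_le {M : Type*} [AddCommMonoid M] [TopologicalSpace M]
    {f : ℤ → M} {m : ℤ} (hf : ∀ w ≤ m, f w = 0) :
    ∑' w : ℤ, f w = ∑' k : ℕ, f (m + 1 + k) := by
  have hinj : Function.Injective fun k : ℕ => m + 1 + k := fun a b h => by simpa using h
  refine (hinj.tsum_eq fun w hw => ?_).symm
  have hmw : m < w := lt_of_not_ge fun h => hw (hf w h)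
  exact ⟨(w - m - 1).toNat, by simp only; omega⟩

lemma condInt_normalizer_pos {μ0 : ℕ → ℝ} (hpos : ∀ i, 1 ≤ i → 0 < μ0 i)
    (hsum : Summable fun i => μ0 (i + 1)) (Δ : ℕ) :
    0 < ∑' s : ℕ, √(μ0 (s + 1) * μ0 (s + 1 + Δ)) := by
  have hsum' := summable_sqrt_mul_shift (fun i => (hpos (i + 1) (by omega)).le) hsum Δ
  simp only [add_right_comm _ Δ 1] at hsum'
  exact hsum'.tsum_pos (fun _ => Real.sqrt_nonneg _) 0
    (Real.sqrt_pos.mpr (mul_pos (hpos 1 le_rfl) (hpos _ (by omega))))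

theorem stmt_4_general (μ0 : ℕ → ℝ) (hpos : ∀ i, 1 ≤ i → 0 < μ0 i)
    (hsum : HasSum (fun i : ℕ => μ0 (i + 1)) 1)
    (α : ℝ) (hα : 0 < α)
    (s t u : ℤ) :
    (∑' w : ℤ, MminusA μ0 α s w * MplusA μ0 α w t) * Tmu μ0 s t u
      = MminusA μ0 α s u * MplusA μ0 α u t := by
  by_cases hu : max s t < u
  swap
  · rw [Tmu, if_neg hu, mul_zero, MminusA_mul_MplusA_of_le μ0 α (not_lt.mp hu)]
  set Δ := (t - s).natAbs
  set S := ∑' k : ℕ, √(μ0 (k + 1) * μ0 (k + 1 + Δ))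
  set C := α ^ (t - s) / ((∑' v : ℕ, √(μ0 (v + 1)) * α ^ (v + 1)) *
    ∑' v : ℕ, √(μ0 (v + 1)) * α⁻¹ ^ (v + 1))
  have hterm : ∀ w, max s t < w → MminusA μ0 α s w * MplusA μ0 α w t
      = C * √(μ0 (w - max s t).toNat * μ0 ((w - max s t).toNat + Δ)) := fun w hw => by
    rw [MminusA_mul_MplusA_of_max_lt μ0 hα.ne' hw, sqrt_toNat_sub_mul_sqrt_toNat_sub μ0 hw,
      Real.sqrt_mul (hpos _ (by omega)).le]
  have hseries : ∑' w : ℤ, MminusA μ0 α s w * MplusA μ0 α w t = C * S := by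
    rw [tsum_int_eq_tsum_nat_of_le fun w => MminusA_mul_MplusA_of_le μ0 α, ← tsum_mul_left]
    refine tsum_congr fun k => ?_
    rw [hterm _ (by omega)]
    congr 4 <;> omega
  have hT : Tmu μ0 s t u = √(μ0 (u - max s t).toNat * μ0 ((u - max s t).toNat + Δ)) / S :=
    if_pos hu
  have hS : S ≠ 0 := (condInt_normalizer_pos hpos hsum.summable Δ).ne'
  rw [hseries, hT, hterm u hu, mul_assoc, mul_div_cancel₀ _ hS]

/-- The integrability relation `(M⁻_α M⁺_α)(s;t) · T_μ(s,t;u) = M⁻_α(s;u) · M⁺_α(u;t)`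
for the `α`-tilted kernels. -/
theorem stmt_4 (μ0 : ℕ → ℝ) (h0 : μ0 0 = 0) (hpos : ∀ i, 1 ≤ i → 0 < μ0 i)
    (hsum : HasSum (fun i : ℕ => μ0 (i + 1)) 1)
    (α : ℝ) (hα : 0 < α)
    (h1 : Summable (fun v : ℕ => Real.sqrt (μ0 (v + 1)) * α ^ (v + 1)))
    (h2 : Summable (fun v : ℕ => Real.sqrt (μ0 (v + 1)) * α⁻¹ ^ (v + 1)))
    (s t u : ℤ) :
    (∑' w : ℤ, MminusA μ0 α s w * MplusA μ0 α w t) * Tmu μ0 s t u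
      = MminusA μ0 α s u * MplusA μ0 α u t :=
  stmt_4_general μ0 hpos hsum α hα s t u
end

section
/- (Sufficiency direction of the invariance criterion for cyclic-HZMM.) Let E be a countable set, let T : E × E × E → [0,1] satisfy ∑_{u∈E} T(s,t;u) = 1 for all s, t ∈ E, and let M⁻, M⁺ : E × E → [0,1] be Markov kernels (each row sums to 1). Assume (i) commutation: for all s, t ∈ E, ∑_{w} M⁻(s;w)·M⁺(w;t) = ∑_{w} M⁺(s;w)·M⁻(w;t), and (ii) for all s, t, u ∈ E, (∑_{w} M⁻(s;w)·M⁺(w;t)) · T(s,t;u) = M⁻(s;u)·M⁺(u;t). Then for every L ≥ 1 and all t, u : ℤ/Lℤ → E: ∑_{s : ℤ/Lℤ → E} (∏_{i∈ℤ/Lℤ} M⁻(s_i;t_i)·M⁺(t_i;s_{i+1})) · (∏_{i∈ℤ/Lℤ} T(t_i,t_{i+1};u_i)) = ∏_{i∈ℤ/Lℤ} M⁻(t_i;u_i)·M⁺(u_i;t_{i+1}); that is, the cyclic horizontal zigzag Markovian measure θ_{(M⁻,M⁺)}((s;t)) = ∏_i M⁻(s_i;t_i)·M⁺(t_i;s_{i+1})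 is invariant under the probabilistic cellular automaton with transition T. -/
/-!
Summing the zigzag weight over the upper row `s` factorises once each factor `M⁺(t_i; s_{i+1})`
is paired with `M⁻(s_{i+1}; t_{i+1})`: the sum is `∏ᵢ (M⁺M⁻)(t_i; t_{i+1})`. By commutation this
equals `∏ᵢ (M⁻M⁺)(t_i; t_{i+1})`, and the local relation turns its product with the transition
weights into `θ((t;u))`.
-/

open Finset

theorem hasSum_fin_pi_prod_of_nonneg {E : Type*} (n : ℕ) {f : Fin n → E → ℝ} {a : Fin n → ℝ}
    (hf : ∀ i x, 0 ≤ f i x) (h : ∀ i, HasSum (f i) (a i)) :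
    HasSum (fun x : Fin n → E => ∏ i, f i (x i)) (∏ i, a i) := by
  induction n with
  | zero => simp
  | succ n ih =>
    have hTail := ih (fun i x => hf i.succ x) (fun i => h i.succ)
    have hSummable := (h 0).summable.mul_of_nonneg hTail.summable (fun x => hf 0 x)
      (fun x => prod_nonneg fun i _ => hf i.succ (x i))
    have hCons := (h 0).mul hTail hSummable
    rw [← (Fin.consEquiv fun _ => E).hasSum_iff, Fin.prod_univ_succ]
    simpa [Function.comp_def, Fin.prod_univ_succ] using hCons

theorem hasSum_pi_prod_of_nonneg {ι E : Type*} [Fintype ι] {f : ι → E → ℝ} {a : ι → ℝ}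
    (hf : ∀ i x, 0 ≤ f i x) (h : ∀ i, HasSum (f i) (a i)) :
    HasSum (fun x : ι → E => ∏ i, f i (x i)) (∏ i, a i) := by
  let e := Fintype.equivFin ι
  have hFin := hasSum_fin_pi_prod_of_nonneg _ (fun k x => hf (e.symm k) x) (fun k => h (e.symm k))
  rw [← (e.symm.arrowCongr (Equiv.refl E)).hasSum_iff, ← e.symm.prod_comp]
  convert hFin using 2 with x
  show ∏ i, f i (x (e i)) = _
  rw [← e.symm.prod_comp]
  simp

/-- After reindexing the `A`-factors by `σ`, the summand is a product of independent factors in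
the variables `s (σ i)`. -/
theorem hasSum_zigzag {ι E : Type*} [Fintype ι] (σ : Equiv.Perm ι) {A B : E → E → ℝ}
    (hA : ∀ x y, 0 ≤ A x y) (hB : ∀ x y, 0 ≤ B x y)
    (hBA : ∀ x y, Summable fun w => B x w * A w y) (t : ι → E) :
    HasSum (fun s : ι → E => ∏ i, A (s i) (t i) * B (t i) (s (σ i)))
      (∏ i, ∑' w, B (t i) w * A w (t (σ i))) := by
  have hProd := hasSum_pi_prod_of_nonneg (f := fun i w => B (t i) w * A w (t (σ i)))
    (fun i w => mul_nonneg (hB _ _) (hA _ _)) (fun i => (hBA _ _).hasSum)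
  rw [← (σ.symm.arrowCongr (Equiv.refl E)).hasSum_iff] at hProd
  convert hProd using 2 with s
  show _ = ∏ i, B (t i) (s (σ i)) * A (s (σ i)) (t (σ i))
  rw [prod_mul_distrib, prod_mul_distrib, mul_comm, Equiv.prod_comp σ fun i => A (s i) (t i)]

theorem stmt_5_general {E : Type*}
    (T : E → E → E → ℝ)
    (Mm Mp : E → E → ℝ)
    (hMm01 : ∀ s u, Mm s u ∈ Set.Icc (0 : ℝ) 1)
    (hMp01 : ∀ s u, Mp s u ∈ Set.Icc (0 : ℝ) 1)
    (hMpsum : ∀ s, HasSum (Mp s) 1)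
    (hcomm : ∀ s t, ∑' w, Mm s w * Mp w t = ∑' w, Mp s w * Mm w t)
    (hint : ∀ s t u, (∑' w, Mm s w * Mp w t) * T s t u = Mm s u * Mp u t)
    (L : ℕ) [NeZero L] (t u : ZMod L → E) :
    HasSum (fun s : ZMod L → E =>
        (∏ i : ZMod L, Mm (s i) (t i) * Mp (t i) (s (i + 1))) *
        (∏ i : ZMod L, T (t i) (t (i + 1)) (u i)))
      (∏ i : ZMod L, Mm (t i) (u i) * Mp (u i) (t (i + 1))) := by
  have hMpMm : ∀ x y, Summable fun w => Mp x w * Mm w y := fun x y =>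
    (hMpsum x).summable.of_nonneg_of_le (fun w => mul_nonneg (hMp01 _ _).1 (hMm01 _ _).1)
      fun w => mul_le_of_le_one_right (hMp01 _ _).1 (hMm01 _ _).2
  have hZigzag := (hasSum_zigzag (Equiv.addRight 1) (fun x y => (hMm01 x y).1)
    (fun x y => (hMp01 x y).1) hMpMm t).mul_right (∏ i, T (t i) (t (i + 1)) (u i))
  have hWeight : (∏ i, ∑' w, Mp (t i) w * Mm w (t (i + 1))) * ∏ i, T (t i) (t (i + 1)) (u i) =
      ∏ i, Mm (t i) (u i) * Mp (u i) (t (i + 1)) := by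
    rw [← prod_mul_distrib]
    exact prod_congr rfl fun i _ => by rw [← hint, hcomm]
  simpa only [Equiv.coe_addRight, hWeight] using hZigzag

/-- Sufficiency direction of the invariance criterion for cyclic-HZMM:
if the kernels `M⁻, M⁺` commute and satisfy the local relation
`(M⁻M⁺)(s;t)·T(s,t;u) = M⁻(s;u)·M⁺(u;t)`, then the cyclic horizontal zigzag
Markovian measure `θ_{(M⁻,M⁺)}` is invariant under the PCA with transition `T`. -/
theorem stmt_5 {E : Type*} [Countable E]
    (T : E → E → E → ℝ) (hT01 : ∀ s t u, T s t u ∈ Set.Icc (0 : ℝ) 1)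
    (hTsum : ∀ s t, HasSum (T s t) 1)
    (Mm Mp : E → E → ℝ)
    (hMm01 : ∀ s u, Mm s u ∈ Set.Icc (0 : ℝ) 1)
    (hMp01 : ∀ s u, Mp s u ∈ Set.Icc (0 : ℝ) 1)
    (hMmsum : ∀ s, HasSum (Mm s) 1) (hMpsum : ∀ s, HasSum (Mp s) 1)
    (hcomm : ∀ s t, ∑' w, Mm s w * Mp w t = ∑' w, Mp s w * Mm w t)
    (hint : ∀ s t u, (∑' w, Mm s w * Mp w t) * T s t u = Mm s u * Mp u t)
    (L : ℕ) [NeZero L] (t u : ZMod L → E) :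
    HasSum (fun s : ZMod L → E =>
        (∏ i : ZMod L, Mm (s i) (t i) * Mp (t i) (s (i + 1))) *
        (∏ i : ZMod L, T (t i) (t (i + 1)) (u i)))
      (∏ i : ZMod L, Mm (t i) (u i) * Mp (u i) (t (i + 1))) :=
  stmt_5_general T Mm Mp hMm01 hMp01 hMpsum hcomm hint L t u
end

section
/- Let E be a countable set, T : E × E × E → [0,1] with ∑_{u} T(s,t;u) = 1 for all s, t, and M⁻, M⁺ : E × E → [0,1] Markov kernels such that for all s, t, u ∈ E, (∑_{w} M⁻(s;w)·M⁺(w;t)) · T(s,t;u) = M⁻(s;u)·M⁺(u;t). Then for all s, t, u, s', t', u' ∈ E such that the four quantities (M⁻M⁺)(s;t), (M⁻M⁺)(s;t'), (M⁻M⁺)(s';t), (M⁻M⁺)(s';t') are all strictly positive (where (M⁻M⁺)(a;b) = ∑_w M⁻(a;w)·M⁺(w;b)), the following identity holds: T(s,t;u)·T(s',t';u)·T(s',t;u')·T(s,t';u') = T(s',t';u')·T(s,t;u')·T(s,t';u)·T(s',t;u). -/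
open scoped BigOperators

/-- The quadratic (Belyaev-type) necessary condition on the transition `T` deduced
from the local relation `(M⁻M⁺)(s;t)·T(s,t;u) = M⁻(s;u)·M⁺(u;t)`, at points where
the relevant compositions `(M⁻M⁺)` are positive. -/
theorem stmt_6 {E : Type*} [Countable E]
    (T : E → E → E → ℝ) (hT01 : ∀ s t u, T s t u ∈ Set.Icc (0 : ℝ) 1)
    (hTsum : ∀ s t, HasSum (T s t) 1)
    (Mm Mp : E → E → ℝ)
    (hMm01 : ∀ s u, Mm s u ∈ Set.Icc (0 : ℝ) 1)
    (hMp01 : ∀ s u, Mp s u ∈ Set.Icc (0 : ℝ) 1)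
    (hMmsum : ∀ s, HasSum (Mm s) 1) (hMpsum : ∀ s, HasSum (Mp s) 1)
    (hint : ∀ s t u, (∑' w, Mm s w * Mp w t) * T s t u = Mm s u * Mp u t)
    (s t u s' t' u' : E)
    (h1 : 0 < ∑' w, Mm s w * Mp w t) (h2 : 0 < ∑' w, Mm s w * Mp w t')
    (h3 : 0 < ∑' w, Mm s' w * Mp w t) (h4 : 0 < ∑' w, Mm s' w * Mp w t') :
    T s t u * T s' t' u * T s' t u' * T s t' u' =
      T s' t' u' * T s t u' * T s t' u * T s' t u := by
  have hp : ∀ a b c, T a b c = Mm a c * Mp c b / (∑' w, Mm a w * Mp w b) ∨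
      (∑' w, Mm a w * Mp w b) = 0 := by
    intro a b c
    rcases eq_or_ne (∑' w, Mm a w * Mp w b) 0 with h | h
    · exact Or.inr h
    · left
      field_simp
      linarith [hint a b c]
  have e1 := (hp s t u).resolve_right h1.ne'
  have e2 := (hp s' t' u).resolve_right h4.ne'
  have e3 := (hp s' t u').resolve_right h3.ne'
  have e4 := (hp s t' u').resolve_right h2.ne'
  have e5 := (hp s' t' u').resolve_right h4.ne'
  have e6 := (hp s t u').resolve_right h1.ne'
  have e7 := (hp s t' u).resolve_right h2.ne'
  have e8 := (hp s' t u).resolve_right h3.ne'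
  rw [e1, e2, e3, e4, e5, e6, e7, e8]
  field_simp
end

section
/- Let (μ_Δ)_{Δ∈ℕ} be a family of probability measures on ℕ*, each with full support (μ_Δ(i) > 0 for all i ≥ 1 and ∑_{i≥1} μ_Δ(i) = 1). Suppose that for every Δ ∈ ℕ and every v ∈ ℕ*: μ0(Δ+1)·μ0(1)·μ_Δ(v)² = μ0(v)·μ0(Δ+v)·μ_Δ(1)². Then for every Δ ∈ ℕ, the series ∑_{s≥1} √(μ0(s)·μ0(s+Δ)) converges and for every v ∈ ℕ*: μ_Δ(v) = √(μ0(v)·μ0(v+Δ)) / ∑_{s≥1} √(μ0(s)·μ0(s+Δ)). -/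
/-! Taking square roots in the hypothesis shows that, for fixed `Δ`, the weights
`v ↦ μ_Δ(v)` are a constant multiple `k` of `v ↦ √(μ0(v)·μ0(v+Δ))`. Since `μ_Δ` sums to `1`,
the square-root series sums to `1/k`, which identifies `k` with the normalizing constant. -/

theorem eq_div_sqrt_mul_sqrt_of_mul_sq_eq {a c x y : ℝ} (ha : 0 < a) (hc : 0 ≤ c)
    (hx : 0 ≤ x) (hy : 0 ≤ y) (h : a * x ^ 2 = c * y ^ 2) :
    x = y / Real.sqrt a * Real.sqrt c := by
  have hsqrt : Real.sqrt a * x = Real.sqrt c * y := by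
    rw [← Real.sqrt_sq hx, ← Real.sqrt_sq hy, ← Real.sqrt_mul ha.le, ← Real.sqrt_mul hc, h]
  have ha' : 0 < Real.sqrt a := Real.sqrt_pos.mpr ha
  field_simp
  linarith

section Normalization

variable {ι : Type*} {w : ι → ℝ} {k : ℝ}

theorem hasSum_inv_of_hasSum_const_mul_eq_one (hk : k ≠ 0) (h : HasSum (fun i => k * w i) 1) :
    HasSum w k⁻¹ := by
  simpa [← mul_assoc, inv_mul_cancel₀ hk] using h.mul_left k⁻¹

theorem const_mul_eq_div_tsum_of_hasSum_const_mul_eq_one (hk : k ≠ 0)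
    (h : HasSum (fun i => k * w i) 1) (i : ι) :
    k * w i = w i / ∑' j, w j := by
  rw [(hasSum_inv_of_hasSum_const_mul_eq_one hk h).tsum_eq, div_inv_eq_mul, mul_comm]

end Normalization

theorem stmt_7_general (μ : ℕ → ℕ → ℝ)
    (hpos : ∀ Δ i, 1 ≤ i → 0 < μ Δ i)
    (hsum : ∀ Δ, HasSum (fun i : ℕ => μ Δ (i + 1)) 1)
    (heq : ∀ Δ : ℕ, ∀ v : ℕ, 1 ≤ v →
      μ 0 (Δ + 1) * μ 0 1 * (μ Δ v) ^ 2 = μ 0 v * μ 0 (Δ + v) * (μ Δ 1) ^ 2) :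
    ∀ Δ : ℕ,
      Summable (fun s : ℕ => Real.sqrt (μ 0 (s + 1) * μ 0 (s + 1 + Δ))) ∧
      ∀ v : ℕ, 1 ≤ v →
        μ Δ v = Real.sqrt (μ 0 v * μ 0 (v + Δ)) /
          ∑' s : ℕ, Real.sqrt (μ 0 (s + 1) * μ 0 (s + 1 + Δ)) := by
  intro Δ
  set k := μ Δ 1 / Real.sqrt (μ 0 (Δ + 1) * μ 0 1)
  have hk : 0 < k :=
    div_pos (hpos Δ 1 le_rfl) (Real.sqrt_pos.mpr (mul_pos (hpos 0 _ (by omega)) (hpos 0 1 le_rfl)))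
  have hprop : ∀ v, 1 ≤ v → μ Δ v = k * Real.sqrt (μ 0 v * μ 0 (v + Δ)) := fun v hv => by
    rw [add_comm v Δ]
    exact eq_div_sqrt_mul_sqrt_of_mul_sq_eq
      (mul_pos (hpos 0 _ (by omega)) (hpos 0 1 le_rfl))
      (mul_pos (hpos 0 v hv) (hpos 0 _ (by omega))).le
      (hpos Δ v hv).le (hpos Δ 1 le_rfl).le (heq Δ v hv)
  have hnorm : HasSum (fun s : ℕ => k * Real.sqrt (μ 0 (s + 1) * μ 0 (s + 1 + Δ))) 1 := by
    simpa only [← hprop _ (Nat.le_add_left 1 _)] using hsum Δ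
  refine ⟨(hasSum_inv_of_hasSum_const_mul_eq_one hk.ne' hnorm).summable, fun v hv => ?_⟩
  obtain ⟨s, rfl⟩ : ∃ s, v = s + 1 := ⟨v - 1, by omega⟩
  rw [hprop _ hv, const_mul_eq_div_tsum_of_hasSum_const_mul_eq_one hk.ne' hnorm s]

/-- If a family `(μ_Δ)` of full-support probabilities on `ℕ*` satisfies
`μ0(Δ+1)·μ0(1)·μ_Δ(v)² = μ0(v)·μ0(Δ+v)·μ_Δ(1)²` for all `Δ` and `v ≥ 1`,
then each `μ_Δ` is given by the Cond-int formula
`μ_Δ(v) = √(μ0(v)·μ0(v+Δ)) / ∑_{s≥1} √(μ0(s)·μ0(s+Δ))`, the series converging. -/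
theorem stmt_7 (μ : ℕ → ℕ → ℝ) (h0 : ∀ Δ, μ Δ 0 = 0)
    (hpos : ∀ Δ i, 1 ≤ i → 0 < μ Δ i)
    (hsum : ∀ Δ, HasSum (fun i : ℕ => μ Δ (i + 1)) 1)
    (heq : ∀ Δ : ℕ, ∀ v : ℕ, 1 ≤ v →
      μ 0 (Δ + 1) * μ 0 1 * (μ Δ v) ^ 2 = μ 0 v * μ 0 (Δ + v) * (μ Δ 1) ^ 2) :
    ∀ Δ : ℕ,
      Summable (fun s : ℕ => Real.sqrt (μ 0 (s + 1) * μ 0 (s + 1 + Δ))) ∧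
      ∀ v : ℕ, 1 ≤ v →
        μ Δ v = Real.sqrt (μ 0 v * μ 0 (v + Δ)) /
          ∑' s : ℕ, Real.sqrt (μ 0 (s + 1) * μ 0 (s + 1 + Δ)) :=
  stmt_7_general μ hpos hsum heq
end

section
/- (Foster–Lyapunov drift inequality for the front line.) Let (μ_Δ)_{Δ∈ℕ} be a family of full-support probability measures on ℕ* satisfying: there exists α > 0 such that μ_Δ(t) ≥ α·∑_{s≥t} μ_Δ(s) for all Δ ∈ ℕ and t ≥ 1. Let L ≥ 1 and let P be the front-line Markov kernel on B̃_L associated to (μ_Δ). Then for every (b,t) ∈ B̃_L: ∑_{(b',t')∈B̃_L} P((b,t),(b',t')) · (∑_{j∈ℤ/2Lℤ} t'_j) ≤ (∑_{j∈ℤ/2Lℤ} t_j) + 2L − α · max_{j∈ℤ/2Lℤ} t_j. -/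
open scoped BigOperators

instance (L : ℕ) [NeZero L] : NeZero (2 * L) :=
  ⟨Nat.mul_ne_zero two_ne_zero (NeZero.ne L)⟩

/-- A bridge: a `±1`-valued function on `ℤ/nℤ` with zero sum. -/
def IsBridge (n : ℕ) [NeZero n] (b : ZMod n → ℤ) : Prop :=
  (∀ i, b i = 1 ∨ b i = -1) ∧ ∑ i : ZMod n, b i = 0

/-- The set `T_b` of admissible edge times for a bridge `b`. -/
def ValidTimes (n : ℕ) (b : ZMod n → ℤ) (t : ZMod n → ℕ) : Prop :=
  ∀ i : ZMod n,
    ((b i = 1 ∧ b (i + 1) = 1) → t i < t (i + 1)) ∧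
    ((b i = -1 ∧ b (i + 1) = -1) → t (i + 1) < t i) ∧
    ((b i = -1 ∧ b (i + 1) = 1) → t i = t (i + 1))

/-- The state space `B̃_L` of the front line on the cylinder of size `L`. -/
def FrontState (L : ℕ) [NeZero L] :=
  {p : (ZMod (2 * L) → ℤ) × (ZMod (2 * L) → ℕ) //
    IsBridge (2 * L) p.1 ∧ ValidTimes (2 * L) p.1 p.2}

/-- The set of local maxima of a bridge. -/
def locMax {n : ℕ} [NeZero n] (b : ZMod n → ℤ) : Finset (ZMod n) :=
  Finset.univ.filter fun i => b i = 1 ∧ b (i + 1) = -1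

/-- The flipping probability `q_i(t) = μ_δ(1+m)/∑_{s≥1} μ_δ(m+s)` at a local maximum `i`,
where `m = min(t_i,t_{i+1})` and `δ = |t_i − t_{i+1}|`. -/
noncomputable def qProb (μ : ℕ → ℕ → ℝ) {n : ℕ} (t : ZMod n → ℕ) (i : ZMod n) : ℝ :=
  μ (Nat.dist (t i) (t (i + 1))) (1 + min (t i) (t (i + 1))) /
    ∑' s : ℕ, μ (Nat.dist (t i) (t (i + 1))) (min (t i) (t (i + 1)) + (s + 1))

/-- The bridge obtained from `b` by flipping the local maxima in `A` into local minima. -/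
def flipB {n : ℕ} [NeZero n] (A : Finset (ZMod n)) (b : ZMod n → ℤ) (i : ZMod n) : ℤ :=
  if i ∈ A then -1 else if i - 1 ∈ A then 1 else b i

/-- The time configuration after flipping the local maxima in `A`. -/
def flipT {n : ℕ} [NeZero n] (A : Finset (ZMod n)) (t : ZMod n → ℕ) (i : ZMod n) : ℕ :=
  if i ∈ A ∨ i - 1 ∈ A then 0 else t i + 1

/-- The front-line Markov kernel `P` associated to a family `(μ_Δ)`. -/
noncomputable def kerP (μ : ℕ → ℕ → ℝ) {n : ℕ} [NeZero n]
    (x y : (ZMod n → ℤ) × (ZMod n → ℕ)) : ℝ :=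
  ∑ A ∈ (locMax x.1).powerset,
    if y.1 = flipB A x.1 ∧ y.2 = flipT A x.2 then
      (∏ i ∈ A, qProb μ x.2 i) * ∏ i ∈ locMax x.1 \ A, (1 - qProb μ x.2 i)
    else 0

section Drift

/-- Bernoulli product expansion sums to 1. -/
lemma bern_sum {ι : Type*} [DecidableEq ι] (q : ι → ℝ) (s : Finset ι) :
    ∑ A ∈ s.powerset, (∏ i ∈ A, q i) * ∏ i ∈ s \ A, (1 - q i) = 1 := by
  rw [← Finset.prod_add]
  exact Finset.prod_eq_one fun i _ => by ring

lemma bern_sum_mem {ι : Type*} [DecidableEq ι] (q : ι → ℝ) (s : Finset ι) (a : ι) (ha : a ∈ s) :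
    ∑ A ∈ s.powerset,
        (if a ∈ A then (∏ i ∈ A, q i) * ∏ i ∈ s \ A, (1 - q i) else 0) = q a := by
  rw [← Finset.insert_erase ha, Finset.sum_powerset_insert (Finset.notMem_erase a s)]
  have h1 : ∑ B ∈ (s.erase a).powerset,
      (if a ∈ B then (∏ i ∈ B, q i) * ∏ i ∈ insert a (s.erase a) \ B, (1 - q i) else 0) = 0 :=
    Finset.sum_eq_zero fun B hB =>
      if_neg (fun h => (Finset.notMem_erase a s) (Finset.mem_powerset.1 hB h))
  rw [h1, zero_add]
  have h2 : ∀ B ∈ (s.erase a).powerset,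
      (if a ∈ insert a B then
          (∏ i ∈ insert a B, q i) * ∏ i ∈ insert a (s.erase a) \ insert a B, (1 - q i)
        else 0)
      = q a * ((∏ i ∈ B, q i) * ∏ i ∈ (s.erase a) \ B, (1 - q i)) := by
    intro B hB
    have haB : a ∉ B := fun h => Finset.notMem_erase a s (Finset.mem_powerset.1 hB h)
    rw [if_pos (Finset.mem_insert_self a B), Finset.prod_insert haB]
    have hsd : insert a (s.erase a) \ insert a B = (s.erase a) \ B := by
      ext k
      simp only [Finset.mem_sdiff, Finset.mem_insert, Finset.mem_erase]
      tauto
    rw [hsd]; ring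
  rw [Finset.sum_congr rfl h2, ← Finset.mul_sum, bern_sum, mul_one]

lemma tsum_ite_le {β : Type*} (P : β → Prop) [DecidablePred P]
    (hP : ∀ y y', P y → P y' → y = y') {c : ℝ} (hc : 0 ≤ c) :
    Summable (fun y => if P y then c else 0) ∧ (∑' y, (if P y then c else 0)) ≤ c := by
  by_cases hex : ∃ y, P y
  · obtain ⟨y0, hy0⟩ := hex
    have hz : ∀ y, y ≠ y0 → (if P y then c else 0) = 0 := fun y hy =>
      if_neg (fun h => hy (hP y y0 h hy0))
    constructor
    · exact summable_of_ne_finset_zero (s := {y0}) (fun y hy => hz y (by simpa using hy))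
    · rw [tsum_eq_single y0 hz]
      split_ifs <;> simp [hc]
  · have hz : ∀ y, (if P y then c else 0) = 0 := fun y => if_neg (fun h => hex ⟨y, h⟩)
    have hfun : (fun y => if P y then c else 0) = fun _ : β => (0 : ℝ) := funext hz
    constructor
    · rw [hfun]; exact summable_zero
    · rw [hfun, tsum_zero]; exact hc

lemma q_bounds (μ : ℕ → ℕ → ℝ) (hpos : ∀ Δ i, 1 ≤ i → 0 < μ Δ i)
    (hsum : ∀ Δ, HasSum (fun i : ℕ => μ Δ (i + 1)) 1)
    (α : ℝ) (hconv : ∀ Δ t : ℕ, 1 ≤ t → α * ∑' s : ℕ, μ Δ (t + s) ≤ μ Δ t)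
    {n : ℕ} (t : ZMod n → ℕ) (i : ZMod n) :
    α ≤ qProb μ t i ∧ qProb μ t i ≤ 1 := by
  set Δ := Nat.dist (t i) (t (i+1)) with hΔ
  set m := min (t i) (t (i+1)) with hm
  have hS : Summable (fun s : ℕ => μ Δ (m + (s+1))) := by
    have h1 := (hsum Δ).summable
    have h2 : (fun s : ℕ => μ Δ (m + (s+1))) = fun s : ℕ => μ Δ ((s + m) + 1) := by
      funext s; congr 1; omega
    rw [h2]
    exact (summable_nat_add_iff (f := fun i => μ Δ (i+1)) m).2 h1
  have hden : 0 < ∑' s : ℕ, μ Δ (m + (s+1)) :=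
    Summable.tsum_pos hS (fun s => (hpos Δ _ (by omega)).le) 0 (hpos Δ _ (by omega))
  constructor
  · rw [qProb, ← hΔ, ← hm, le_div_iff₀ hden]
    calc α * ∑' s : ℕ, μ Δ (m + (s+1)) = α * ∑' s : ℕ, μ Δ (1 + m + s) := by
          congr 1; exact tsum_congr fun s => by congr 1; omega
      _ ≤ μ Δ (1+m) := hconv Δ (1+m) (by omega)
  · rw [qProb, ← hΔ, ← hm, div_le_one hden]
    have h0 : μ Δ (1 + m) = (fun s : ℕ => μ Δ (m + (s+1))) 0 := by
      simp only; congr 1; omega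
    rw [h0]
    exact Summable.le_tsum hS 0 (fun s _ => (hpos Δ _ (by omega)).le)

lemma flipT_sum {n : ℕ} [NeZero n] (b : ZMod n → ℤ) (t : ZMod n → ℕ)
    (A : Finset (ZMod n)) (hA : A ⊆ locMax b) :
    ∑ j : ZMod n, (flipT A t j : ℝ)
      = (∑ j : ZMod n, (t j : ℝ)) + n - ∑ i ∈ A, ((t i : ℝ) + (t (i+1) : ℝ) + 2) := by
  classical
  set D : Finset (ZMod n) := A ∪ A.image (· + 1) with hD
  have hmemA : ∀ i ∈ A, b i = 1 ∧ b (i+1) = -1 := by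
    intro i hi
    have := hA hi
    simpa [locMax] using this
  have hdisj : Disjoint A (A.image (· + 1)) := by
    rw [Finset.disjoint_left]
    intro j hj hj2
    obtain ⟨a, ha, rfl⟩ := Finset.mem_image.1 hj2
    have h1 := (hmemA _ hj).1
    have h2 := (hmemA a ha).2
    rw [h1] at h2; norm_num at h2
  have hmem : ∀ j, (j ∈ A ∨ j - 1 ∈ A) ↔ j ∈ D := by
    intro j
    simp only [hD, Finset.mem_union, Finset.mem_image]
    constructor
    · rintro (h | h)
      · exact Or.inl h
      · exact Or.inr ⟨j - 1, h, by rw [sub_add_cancel]⟩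
    · rintro (h | ⟨a, ha, rfl⟩)
      · exact Or.inl h
      · exact Or.inr (by rwa [add_sub_cancel_right])
  have step1 : ∑ j : ZMod n, (flipT A t j : ℝ)
      = ∑ j : ZMod n, (if j ∈ D then 0 else ((t j : ℝ) + 1)) := by
    apply Finset.sum_congr rfl
    intro j _
    simp only [flipT]
    by_cases hj : j ∈ D
    · rw [if_pos ((hmem j).2 hj), if_pos hj]; norm_num
    · rw [if_neg (fun h => hj ((hmem j).1 h)), if_neg hj]; push_cast; ring
  rw [step1, Finset.sum_ite, Finset.sum_const_zero, zero_add]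
  have hfil : Finset.univ.filter (fun j => ¬ j ∈ D) = Finset.univ \ D := by
    ext j; simp
  rw [hfil, Finset.sum_sdiff_eq_sub (Finset.subset_univ D)]
  have huniv : ∑ j : ZMod n, ((t j : ℝ) + 1) = (∑ j : ZMod n, (t j : ℝ)) + n := by
    rw [Finset.sum_add_distrib, Finset.sum_const, Finset.card_univ, ZMod.card n,
      nsmul_eq_mul, mul_one]
  have hDsum : ∑ j ∈ D, ((t j : ℝ) + 1) = ∑ i ∈ A, ((t i : ℝ) + (t (i+1) : ℝ) + 2) := by
    rw [hD, Finset.sum_union hdisj, Finset.sum_image (fun a _ c _ h => by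
      simpa using add_left_injective 1 h)]
    rw [← Finset.sum_add_distrib]
    exact Finset.sum_congr rfl fun i _ => by ring
  rw [huniv, hDsum]

lemma exists_locMax {n : ℕ} [NeZero n] (b : ZMod n → ℤ) (t : ZMod n → ℕ)
    (hb : ∀ i, b i = 1 ∨ b i = -1) (ht : ValidTimes n b t) :
    ∃ i ∈ locMax b, (Finset.univ.sup t : ℕ) ≤ max (t i) (t (i+1)) := by
  obtain ⟨j, -, hj⟩ := Finset.exists_mem_eq_sup Finset.univ Finset.univ_nonempty t
  have hle : ∀ k, t k ≤ Finset.univ.sup t := fun k => Finset.le_sup (Finset.mem_univ k)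
  rcases hb j with h1 | h1
  · have h2 : b (j+1) = -1 := by
      rcases hb (j+1) with h2 | h2
      · exfalso
        have h3 := (ht j).1 ⟨h1, h2⟩
        have h4 := hle (j+1)
        omega
      · exact h2
    exact ⟨j, by simp [locMax, h1, h2], by rw [hj]; exact le_max_left _ _⟩
  · have h0 : b (j-1) = 1 := by
      rcases hb (j-1) with h2 | h2
      · exact h2
      · exfalso
        have h3 := (ht (j-1)).2.1 ⟨h2, by rwa [sub_add_cancel]⟩
        rw [sub_add_cancel] at h3
        have h4 := hle (j-1)
        omega
    refine ⟨j-1, by simp [locMax, h0, sub_add_cancel, h1], ?_⟩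
    rw [sub_add_cancel, hj]
    exact le_max_right _ _

end Drift

/-- Foster–Lyapunov drift inequality for the front line: one step of the kernel decreases
the total time `∑_j t_j` by at least `α·max_j t_j − 2L` in expectation. -/
theorem stmt_9 (μ : ℕ → ℕ → ℝ) (h0 : ∀ Δ, μ Δ 0 = 0)
    (hpos : ∀ Δ i, 1 ≤ i → 0 < μ Δ i)
    (hsum : ∀ Δ, HasSum (fun i : ℕ => μ Δ (i + 1)) 1)
    (α : ℝ) (hα : 0 < α)
    (hconv : ∀ Δ t : ℕ, 1 ≤ t → α * ∑' s : ℕ, μ Δ (t + s) ≤ μ Δ t)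
    (L : ℕ) [NeZero L] (x : FrontState L) :
    ∑' y : FrontState L,
        kerP μ x.1 y.1 * ∑ j : ZMod (2 * L), (y.1.2 j : ℝ)
      ≤ (∑ j : ZMod (2 * L), (x.1.2 j : ℝ)) + 2 * L
        - α * ((Finset.univ.sup x.1.2 : ℕ) : ℝ) := by
  classical
  set b := x.1.1 with hbdef
  set t := x.1.2 with htdef
  have hbr : IsBridge (2*L) b := x.2.1
  have hvt : ValidTimes (2*L) b t := x.2.2
  set M := locMax b with hM
  set q : ZMod (2*L) → ℝ := qProb μ t with hqdef
  have hq : ∀ i, α ≤ q i ∧ q i ≤ 1 := fun i => q_bounds μ hpos hsum α hconv t i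
  have hq0 : ∀ i, 0 ≤ q i := fun i => le_trans hα.le (hq i).1
  set w : Finset (ZMod (2*L)) → ℝ :=
    fun A => (∏ i ∈ A, q i) * ∏ i ∈ M \ A, (1 - q i) with hwdef
  have hw0 : ∀ A, 0 ≤ w A := fun A =>
    mul_nonneg (Finset.prod_nonneg fun i _ => hq0 i)
      (Finset.prod_nonneg fun i _ => by linarith [(hq i).2])
  set S := ∑ j : ZMod (2*L), (t j : ℝ) with hSdef
  have hVA : ∀ A ∈ M.powerset, ∑ j : ZMod (2*L), ((flipT A t j : ℕ) : ℝ)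
      = S + ((2*L : ℕ) : ℝ) - ∑ i ∈ A, ((t i : ℝ) + (t (i+1) : ℝ) + 2) := fun A hA =>
    flipT_sum b t A (Finset.mem_powerset.1 hA)
  have key : ∀ A : Finset (ZMod (2*L)),
      Summable (fun y : FrontState L =>
        if y.1.1 = flipB A b ∧ y.1.2 = flipT A t then
          w A * ∑ j : ZMod (2*L), ((flipT A t j : ℕ) : ℝ) else 0)
      ∧ (∑' y : FrontState L, (if y.1.1 = flipB A b ∧ y.1.2 = flipT A t then
          w A * ∑ j : ZMod (2*L), ((flipT A t j : ℕ) : ℝ) else 0))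
        ≤ w A * ∑ j : ZMod (2*L), ((flipT A t j : ℕ) : ℝ) := by
    intro A
    apply tsum_ite_le
    · intro y y' hy hy'
      exact Subtype.ext (Prod.ext (hy.1.trans hy'.1.symm) (hy.2.trans hy'.2.symm))
    · exact mul_nonneg (hw0 A) (Finset.sum_nonneg fun j _ => Nat.cast_nonneg _)
  have hinteg : ∀ y : FrontState L,
      kerP μ x.1 y.1 * ∑ j : ZMod (2*L), (y.1.2 j : ℝ)
      = ∑ A ∈ M.powerset, (if y.1.1 = flipB A b ∧ y.1.2 = flipT A t
          then w A * ∑ j : ZMod (2*L), ((flipT A t j : ℕ) : ℝ) else 0) := by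
    intro y
    simp only [kerP, ← hbdef, ← htdef, ← hM, ← hqdef]
    rw [Finset.sum_mul]
    apply Finset.sum_congr rfl
    intro A _
    rw [ite_mul, zero_mul]
    by_cases hc : y.1.1 = flipB A b ∧ y.1.2 = flipT A t
    · rw [if_pos hc, if_pos hc, hc.2, hwdef]
    · rw [if_neg hc, if_neg hc]
  obtain ⟨i₀, hi₀M, hi₀⟩ := exists_locMax b t hbr.1 hvt
  set d : ℝ := (t i₀ : ℝ) + (t (i₀+1) : ℝ) + 2 with hd
  have hw_one : ∑ A ∈ M.powerset, w A = 1 := by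
    simp only [hwdef]; exact bern_sum q M
  have hq_mem : ∑ A ∈ M.powerset, (if i₀ ∈ A then w A else 0) = q i₀ := by
    simp only [hwdef]; exact bern_sum_mem q M i₀ hi₀M
  calc ∑' y : FrontState L, kerP μ x.1 y.1 * ∑ j : ZMod (2*L), (y.1.2 j : ℝ)
      = ∑' y : FrontState L, ∑ A ∈ M.powerset, (if y.1.1 = flipB A b ∧ y.1.2 = flipT A t
          then w A * ∑ j : ZMod (2*L), ((flipT A t j : ℕ) : ℝ) else 0) := tsum_congr hinteg
    _ = ∑ A ∈ M.powerset, ∑' y : FrontState L, (if y.1.1 = flipB A b ∧ y.1.2 = flipT A t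
          then w A * ∑ j : ZMod (2*L), ((flipT A t j : ℕ) : ℝ) else 0) :=
        Summable.tsum_finsetSum (fun A _ => (key A).1)
    _ ≤ ∑ A ∈ M.powerset, w A * (S + ((2*L : ℕ) : ℝ)
          - ∑ i ∈ A, ((t i : ℝ) + (t (i+1) : ℝ) + 2)) := by
        apply Finset.sum_le_sum
        intro A hA
        exact le_trans (key A).2 (le_of_eq (by rw [hVA A hA]))
    _ ≤ ∑ A ∈ M.powerset, w A * (S + ((2*L : ℕ) : ℝ) - (if i₀ ∈ A then d else 0)) := by
        apply Finset.sum_le_sum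
        intro A hA
        apply mul_le_mul_of_nonneg_left _ (hw0 A)
        apply sub_le_sub_left
        by_cases hi : i₀ ∈ A
        · rw [if_pos hi, hd]
          exact Finset.single_le_sum (f := fun i => (t i : ℝ) + (t (i+1) : ℝ) + 2)
            (fun i _ => by positivity) hi
        · rw [if_neg hi]
          exact Finset.sum_nonneg fun i _ => by positivity
    _ = (S + ((2*L : ℕ) : ℝ)) - q i₀ * d := by
        have e1 : ∀ A ∈ M.powerset, w A * (S + ((2*L : ℕ) : ℝ) - (if i₀ ∈ A then d else 0))
            = w A * (S + ((2*L : ℕ) : ℝ)) - (if i₀ ∈ A then w A else 0) * d := by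
          intro A _; split_ifs <;> ring
        rw [Finset.sum_congr rfl e1, Finset.sum_sub_distrib, ← Finset.sum_mul,
          ← Finset.sum_mul, hw_one, hq_mem]
        ring
    _ ≤ S + 2*(L : ℝ) - α * ((Finset.univ.sup t : ℕ) : ℝ) := by
        have h2 : (Finset.univ.sup t : ℕ) ≤ t i₀ + t (i₀+1) + 2 :=
          le_trans hi₀ (by rcases le_total (t i₀) (t (i₀+1)) with h | h
                           · rw [max_eq_right h]; omega
                           · rw [max_eq_left h]; omega)
        have hMx : ((Finset.univ.sup t : ℕ) : ℝ) ≤ d := by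
          calc ((Finset.univ.sup t : ℕ) : ℝ) ≤ ((t i₀ + t (i₀+1) + 2 : ℕ) : ℝ) :=
                Nat.cast_le.2 h2
            _ = d := by rw [hd]; push_cast; ring
        have hmul : α * ((Finset.univ.sup t : ℕ) : ℝ) ≤ q i₀ * d :=
          mul_le_mul (hq i₀).1 hMx (Nat.cast_nonneg _) (hq0 i₀)
        push_cast
        linarith
end

section
/- Let μ0 be a full-support probability on ℕ* and let (μ_Δ)_{Δ∈ℕ} be the Cond-int family associated to μ0. Then the following are equivalent: (i) μ_Δ = μ0 for every Δ ∈ ℕ; (ii) there exists p ∈ (0,1) such that μ0 is the geometric law on ℕ* with success parameter p, i.e. μ0(i) = p·(1−p)^{i−1} for all i ≥ 1. -/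
open scoped BigOperators

/-- The Cond-int family is constant (equal to `μ0`) iff `μ0` is geometric on `ℕ*`. -/
theorem stmt_10 (μ0 : ℕ → ℝ) (h0 : μ0 0 = 0) (hpos : ∀ i, 1 ≤ i → 0 < μ0 i)
    (hsum : HasSum (fun i : ℕ => μ0 (i + 1)) 1) :
    (∀ Δ t : ℕ, 1 ≤ t → condInt μ0 Δ t = μ0 t) ↔
      ∃ p : ℝ, p ∈ Set.Ioo (0 : ℝ) 1 ∧
        ∀ i : ℕ, 1 ≤ i → μ0 i = p * (1 - p) ^ (i - 1) := by
  constructor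
  · intro h
    set c := ∑' s : ℕ, Real.sqrt (μ0 (s + 1) * μ0 (s + 1 + 1)) with hc
    have hμ1 := hpos 1 le_rfl
    have hcne : c ≠ 0 := by
      intro hc0
      have h1 := h 1 1 le_rfl
      rw [condInt, ← hc, hc0, div_zero] at h1
      exact absurd h1.symm (ne_of_gt hμ1)
    set r := c ^ 2 with hr
    have hstep : ∀ t, 1 ≤ t → μ0 (t + 1) = μ0 t * r := by
      intro t ht
      have hμt := hpos t ht
      have hμt1 := hpos (t + 1) (by omega)
      have h1 := h 1 t ht
      rw [condInt, ← hc, div_eq_iff hcne] at h1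
      have h2 : μ0 t * μ0 (t + 1) = (μ0 t * c) ^ 2 := by
        rw [← h1, Real.sq_sqrt (mul_nonneg hμt.le hμt1.le)]
      have h3 : μ0 t * μ0 (t + 1) = μ0 t * (μ0 t * r) := by
        rw [h2, hr]; ring
      exact mul_left_cancel₀ (ne_of_gt hμt) h3
    have hgeo : ∀ i : ℕ, μ0 (i + 1) = μ0 1 * r ^ i := by
      intro i
      induction i with
      | zero => simp
      | succ n ih =>
        rw [hstep (n + 1) (by omega), ih, pow_succ]; ring
    have hr0 : 0 < r := by
      have h2pos := hpos 2 (by norm_num)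
      have h2 : μ0 2 = μ0 1 * r := by simpa using hgeo 1
      nlinarith
    have hs2 : HasSum (fun i : ℕ => μ0 1 * r ^ i) 1 := by
      have heq : (fun i : ℕ => μ0 (i + 1)) = fun i : ℕ => μ0 1 * r ^ i := funext hgeo
      rwa [heq] at hsum
    have hsr : Summable (fun i : ℕ => r ^ i) := by
      have hs := hs2.summable
      have := hs.mul_left (μ0 1)⁻¹
      simpa [← mul_assoc, inv_mul_cancel₀ (ne_of_gt hμ1)] using this
    have hr1 : r < 1 := by
      have := summable_geometric_iff_norm_lt_one.mp hsr
      rw [Real.norm_eq_abs, abs_lt] at this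
      exact this.2
    have hsg : HasSum (fun i : ℕ => μ0 1 * r ^ i) (μ0 1 * (1 - r)⁻¹) :=
      (hasSum_geometric_of_lt_one hr0.le hr1).mul_left _
    have huniq : μ0 1 * (1 - r)⁻¹ = 1 := hsg.unique hs2
    have hp : μ0 1 = 1 - r := by
      have h1r : (1 : ℝ) - r ≠ 0 := by linarith
      field_simp at huniq
      linarith
    refine ⟨μ0 1, ⟨hμ1, by rw [hp]; linarith⟩, ?_⟩
    intro i hi
    have h1p : 1 - μ0 1 = r := by rw [hp]; ring
    rw [h1p]
    have := hgeo (i - 1)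
    rwa [show i - 1 + 1 = i by omega] at this
  · rintro ⟨p, ⟨hp0, hp1⟩, hgeo⟩ Δ t ht
    set q := 1 - p with hq
    have hq0 : 0 < q := by rw [hq]; linarith
    have key : ∀ s, 1 ≤ s →
        Real.sqrt (μ0 s * μ0 (s + Δ)) = μ0 s * Real.sqrt (q ^ Δ) := by
      intro s hs
      have h1 : μ0 s = p * q ^ (s - 1) := hgeo s hs
      have h2 : μ0 (s + Δ) = p * q ^ (s - 1 + Δ) := by
        have := hgeo (s + Δ) (by omega)
        rwa [show s + Δ - 1 = s - 1 + Δ by omega] at this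
      have heq : μ0 s * μ0 (s + Δ) = (μ0 s) ^ 2 * q ^ Δ := by
        rw [h1, h2, pow_add]; ring
      rw [heq, Real.sqrt_mul (sq_nonneg _), Real.sqrt_sq (hpos s hs).le]
    have hden : (∑' s : ℕ, Real.sqrt (μ0 (s + 1) * μ0 (s + 1 + Δ)))
        = Real.sqrt (q ^ Δ) := by
      have hcong : ∀ s : ℕ,
          Real.sqrt (μ0 (s + 1) * μ0 (s + 1 + Δ)) = μ0 (s + 1) * Real.sqrt (q ^ Δ) :=
        fun s => key (s + 1) (by omega)
      rw [tsum_congr hcong, tsum_mul_right, hsum.tsum_eq, one_mul]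
    have hsne : Real.sqrt (q ^ Δ) ≠ 0 :=
      ne_of_gt (Real.sqrt_pos.mpr (pow_pos hq0 Δ))
    rw [condInt, hden, key t ht, mul_div_assoc, div_self hsne, mul_one]
end

section
/- (Stationary law of the classical geometric LPP front line on the cylinder.) Let p ∈ (0,1) and L ≥ 1. Define the Markov kernel M on B_L as follows: for b, c ∈ B_L, M_{b,c} = p^{|A|}·(1−p)^{k_b − |A|} if c is obtained from b by choosing a subset A of the local maxima of b and, for each i ∈ A, replacing (b_i, b_{i+1}) = (1,−1) by (c_i, c_{i+1}) = (−1,1) while keeping all other coordinates; and M_{b,c} = 0 if c is not of this form. Then the measure ν_L(b) = (1−p)^{−k_b} / Z with Z = ∑_{b∈B_L} (1−p)^{−k_b} is stationary for M: for all c ∈ B_L, ∑_{b∈B_L} (1−p)^{−k_b} · M_{b,c} = (1−p)^{−k_c}. -/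
/-!
Weighting the transition `b → flipB A b` by `(1-p)^{-k_b}` turns its probability into
`p^{|A|} (1-p)^{-|A|}`, which no longer depends on `b`. Flipping a set `A` of local maxima of `b`
is undone by turning the same `A`, now a set of local minima of `c = flipB A b`, back into maxima;
so the pairs `(b, A)` leading to `c` correspond to the subsets `A` of the local minima of `c`.
Summing over these subsets gives `(1-p)^{-m} (p + (1-p))^m = (1-p)^{-m}`, where `m` is the number
of local minima of `c`, and a `±1` sequence on a cycle has as many local minima as local maxima.
-/

open scoped BigOperators

/-- The Markov kernel of the front line of the classical geometric LPP on the cylinder: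
each local maximum becomes a local minimum independently with probability `p`. -/
noncomputable def geoKer (p : ℝ) {n : ℕ} [NeZero n] (b c : ZMod n → ℤ) : ℝ :=
  ∑ A ∈ (locMax b).powerset,
    if c = flipB A b then p ^ A.card * (1 - p) ^ ((locMax b).card - A.card) else 0

def locMin {n : ℕ} [NeZero n] (c : ZMod n → ℤ) : Finset (ZMod n) :=
  Finset.univ.filter fun i => c i = -1 ∧ c (i + 1) = 1

def unflipB {n : ℕ} [NeZero n] (A : Finset (ZMod n)) (c : ZMod n → ℤ) (i : ZMod n) : ℤ :=
  if i ∈ A then 1 else if i - 1 ∈ A then -1 else c i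

section Flip

variable {n : ℕ} [NeZero n] {A : Finset (ZMod n)} {b c : ZMod n → ℤ}

lemma mem_locMax {i : ZMod n} : i ∈ locMax b ↔ b i = 1 ∧ b (i + 1) = -1 := by
  simp [locMax]

lemma mem_locMin {i : ZMod n} : i ∈ locMin c ↔ c i = -1 ∧ c (i + 1) = 1 := by
  simp [locMin]

lemma subset_locMin_flipB (hA : A ⊆ locMax b) : A ⊆ locMin (flipB A b) := by
  intro i hi
  have hmax := fun j (hj : j ∈ A) => mem_locMax.1 (hA hj)
  simp only [mem_locMin, flipB]
  grind [sub_add_cancel, add_sub_cancel_right]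

lemma unflipB_flipB (hA : A ⊆ locMax b) : unflipB A (flipB A b) = b := by
  funext i
  have hmax := fun j (hj : j ∈ A) => mem_locMax.1 (hA hj)
  simp only [unflipB, flipB]
  grind [sub_add_cancel, add_sub_cancel_right]

lemma subset_locMax_unflipB (hA : A ⊆ locMin c) : A ⊆ locMax (unflipB A c) := by
  intro i hi
  have hmin := fun j (hj : j ∈ A) => mem_locMin.1 (hA hj)
  simp only [mem_locMax, unflipB]
  grind [sub_add_cancel, add_sub_cancel_right]

lemma flipB_unflipB (hA : A ⊆ locMin c) : flipB A (unflipB A c) = c := by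
  funext i
  have hmin := fun j (hj : j ∈ A) => mem_locMin.1 (hA hj)
  simp only [unflipB, flipB]
  grind [sub_add_cancel, add_sub_cancel_right]

lemma flipB_eq_iff :
    A ⊆ locMax b ∧ c = flipB A b ↔ A ⊆ locMin c ∧ b = unflipB A c := by
  constructor
  · rintro ⟨hA, rfl⟩
    exact ⟨subset_locMin_flipB hA, (unflipB_flipB hA).symm⟩
  · rintro ⟨hA, rfl⟩
    exact ⟨subset_locMax_unflipB hA, (flipB_unflipB hA).symm⟩

end Flip

section Bridge

variable {n : ℕ} [NeZero n]

lemma isBridge_unflipB {A : Finset (ZMod n)} {c : ZMod n → ℤ} (hc : IsBridge n c)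
    (hA : A ⊆ locMin c) : IsBridge n (unflipB A c) := by
  have hmin := fun j (hj : j ∈ A) => mem_locMin.1 (hA hj)
  have unflipB_apply : ∀ i, unflipB A c i
      = c i + (if i ∈ A then 2 else 0) - (if i - 1 ∈ A then 2 else 0) := by
    intro i
    simp only [unflipB]
    grind [sub_add_cancel, add_sub_cancel_right]
  refine ⟨fun i => ?_, ?_⟩
  · simp only [unflipB]
    split_ifs
    exacts [.inl rfl, .inr rfl, hc.1 i]
  · have shift : ∑ i, (if i - 1 ∈ A then 2 else 0 : ℤ) = ∑ i, if i ∈ A then 2 else 0 :=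
      Equiv.sum_comp (Equiv.subRight 1) fun i => if i ∈ A then 2 else 0
    simp_rw [unflipB_apply, Finset.sum_sub_distrib, Finset.sum_add_distrib, hc.2, shift,
      zero_add, sub_self]

lemma card_locMin_eq_card_locMax {c : ZMod n → ℤ} (h : ∀ i, c i = 1 ∨ c i = -1) :
    (locMin c).card = (locMax c).card := by
  have indicator_locMin : ∀ i, (if c i = -1 ∧ c (i + 1) = 1 then 1 else 0 : ℤ)
      = (if c i = 1 ∧ c (i + 1) = -1 then 1 else 0)
        + (if c (i + 1) = 1 then 1 else 0) - (if c i = 1 then 1 else 0) := by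
    intro i
    rcases h i with h1 | h1 <;> rcases h (i + 1) with h2 | h2 <;> simp [h1, h2]
  have shift : ∑ i, (if c (i + 1) = 1 then 1 else 0 : ℤ) = ∑ i, if c i = 1 then 1 else 0 :=
    Equiv.sum_comp (Equiv.addRight 1) fun i => if c i = 1 then 1 else 0
  have : ∑ i, (if c i = -1 ∧ c (i + 1) = 1 then 1 else 0 : ℤ)
      = ∑ i, (if c i = 1 ∧ c (i + 1) = -1 then 1 else 0 : ℤ) := by
    simp_rw [indicator_locMin, Finset.sum_sub_distrib, Finset.sum_add_distrib, shift,
      add_sub_cancel_right]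
  simpa only [locMin, locMax, Finset.sum_boole, Nat.cast_inj] using this

instance : Finite {b : ZMod n → ℤ // IsBridge n b} :=
  Set.Finite.to_subtype <| (Set.Finite.pi (t := fun _ => ({1, -1} : Set ℤ))
    fun _ => Set.toFinite _).subset fun b hb i => by simpa using hb.1 i

noncomputable instance : Fintype {b : ZMod n → ℤ // IsBridge n b} := Fintype.ofFinite _

lemma sum_bridge_ite_flipB {M : Type*} [AddCommMonoid M] {c : ZMod n → ℤ}
    (hc : IsBridge n c) (A : Finset (ZMod n)) (x : M) :
    ∑ b : {b : ZMod n → ℤ // IsBridge n b},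
        (if A ⊆ locMax b.1 ∧ c = flipB A b.1 then x else 0)
      = if A ⊆ locMin c then x else 0 := by
  simp_rw [flipB_eq_iff]
  split_ifs with hA
  · rw [Fintype.sum_eq_single ⟨unflipB A c, isBridge_unflipB hc hA⟩]
    · simp [hA]
    · rintro b hb
      exact if_neg fun h => hb (Subtype.ext h.2)
  · exact Finset.sum_eq_zero fun b _ => if_neg fun h => hA h.1

end Bridge

lemma zpow_neg_mul_pow_sub {K : Type*} [DivisionRing K] {q : K} (hq : q ≠ 0) {a k : ℕ}
    (h : a ≤ k) : q ^ (-(k : ℤ)) * q ^ (k - a) = q ^ (-(a : ℤ)) := by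
  rw [← zpow_natCast, Nat.cast_sub h, ← zpow_add₀ hq]
  ring_nf

lemma sum_powerset_pow_mul_zpow_neg {ι K : Type*} [Field K] {p q : K} (hq : q ≠ 0)
    (hpq : p + q = 1) (s : Finset ι) :
    ∑ t ∈ s.powerset, p ^ t.card * q ^ (-(t.card : ℤ)) = q ^ (-(s.card : ℤ)) := by
  calc ∑ t ∈ s.powerset, p ^ t.card * q ^ (-(t.card : ℤ))
      = q ^ (-(s.card : ℤ)) * ∑ t ∈ s.powerset, p ^ t.card * q ^ (s.card - t.card) := by
        rw [Finset.mul_sum]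
        refine Finset.sum_congr rfl fun t ht => ?_
        rw [mul_left_comm,
          zpow_neg_mul_pow_sub hq (Finset.card_le_card (Finset.mem_powerset.1 ht))]
    _ = q ^ (-(s.card : ℤ)) := by rw [Finset.sum_pow_mul_eq_add_pow, hpq, one_pow, mul_one]

lemma zpow_neg_card_mul_geoKer {p : ℝ} (hq : 1 - p ≠ 0) {n : ℕ} [NeZero n]
    (b c : ZMod n → ℤ) :
    (1 - p) ^ (-((locMax b).card : ℤ)) * geoKer p b c
      = ∑ A : Finset (ZMod n), if A ⊆ locMax b ∧ c = flipB A b then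
          p ^ A.card * (1 - p) ^ (-(A.card : ℤ)) else 0 := by
  simp_rw [ite_and, ← Finset.mem_powerset]
  rw [Finset.sum_ite_mem, Finset.univ_inter, geoKer, Finset.mul_sum]
  refine Finset.sum_congr rfl fun A hA => ?_
  rw [mul_ite, mul_zero, mul_left_comm,
    zpow_neg_mul_pow_sub hq (Finset.card_le_card (Finset.mem_powerset.1 hA))]

/-- The measure `ν_L(b) ∝ (1−p)^{−k_b}` is stationary for the geometric LPP front-line
kernel on the cylinder. -/
theorem stmt_11 (p : ℝ) (hp : p ∈ Set.Ioo (0 : ℝ) 1) (L : ℕ) [NeZero L]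
    (c : ZMod (2 * L) → ℤ) (hc : IsBridge (2 * L) c) :
    ∑' b : {b : ZMod (2 * L) → ℤ // IsBridge (2 * L) b},
        (1 - p) ^ (-((locMax b.1).card : ℤ)) * geoKer p b.1 c
      = (1 - p) ^ (-((locMax c).card : ℤ)) := by
  have hq : 1 - p ≠ 0 := sub_ne_zero.mpr hp.2.ne'
  rw [tsum_fintype]
  simp_rw [zpow_neg_card_mul_geoKer hq]
  rw [Finset.sum_comm]
  simp_rw [sum_bridge_ite_flipB hc, ← Finset.mem_powerset]
  rw [Finset.sum_ite_mem, Finset.univ_inter,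
    sum_powerset_pow_mul_zpow_neg hq (add_sub_cancel p 1), card_locMin_eq_card_locMax hc.1]
end

section
/- (Core of the identification of directed edge-LPP as a GLPP.) Let μ be a probability measure on ℕ* and let ζ₁, ζ₂ be independent ℕ*-valued random variables, each distributed according to μ. Then for every Δ ∈ ℕ and every i ∈ ℕ*: P( max(ζ₁, Δ + ζ₂) = Δ + i ) = μ(i+Δ)·∑_{j=1}^{i−1} μ(j) + μ(i)·∑_{j=1}^{i−1+Δ} μ(j) + μ(i)·μ(i+Δ). In other words, the directed edge-LPP with i.i.d. edge weights of law μ is the generalised LPP with parameter family μ_Δ(i) = μ(i+Δ)·∑_{j=1}^{i−1} μ(j) + μ(i)·∑_{j=1}^{i−1+Δ} μ(j) + μ(i)·μ(i+Δ). -/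
open MeasureTheory ProbabilityTheory
open scoped BigOperators

lemma lt_measure {Ω : Type*} [MeasurableSpace Ω] (P : Measure Ω)
    (μ : ℕ → ℝ) (ζ : Ω → ℕ) (hζ : Measurable ζ)
    (hlaw : ∀ i : ℕ, P {ω | ζ ω = i} = ENNReal.ofReal (μ i)) (n : ℕ) :
    P {ω | ζ ω < n} = ∑ j ∈ Finset.range n, ENNReal.ofReal (μ j) := by
  have hset : {ω | ζ ω < n} = ⋃ j ∈ Finset.range n, {ω | ζ ω = j} := by
    ext ω; simp [Finset.mem_range]
  rw [hset, measure_biUnion_finset]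
  · exact Finset.sum_congr rfl fun j _ => hlaw j
  · intro a _ b _ hab
    simp only [Function.onFun, Set.disjoint_left]
    intro ω ha hb; exact hab (ha ▸ hb ▸ rfl)
  · intro j _
    exact hζ (measurableSet_singleton j)

/-- Core of the identification of directed edge-LPP as a GLPP: if `ζ₁, ζ₂` are
independent with law `μ` on `ℕ*`, then for all `Δ ∈ ℕ` and `i ≥ 1`,
`P(max(ζ₁, Δ+ζ₂) = Δ+i) = μ(i+Δ)·∑_{j=1}^{i−1} μ(j) + μ(i)·∑_{j=1}^{i−1+Δ} μ(j)
  + μ(i)·μ(i+Δ)`. -/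
theorem stmt_13 {Ω : Type*} [MeasurableSpace Ω] (P : Measure Ω)
    [IsProbabilityMeasure P]
    (μ : ℕ → ℝ) (h0 : μ 0 = 0) (hnn : ∀ i, 0 ≤ μ i)
    (hsum : HasSum (fun i : ℕ => μ (i + 1)) 1)
    (ζ₁ ζ₂ : Ω → ℕ) (hm1 : Measurable ζ₁) (hm2 : Measurable ζ₂)
    (hindep : IndepFun ζ₁ ζ₂ P)
    (hlaw1 : ∀ i : ℕ, P {ω | ζ₁ ω = i} = ENNReal.ofReal (μ i))
    (hlaw2 : ∀ i : ℕ, P {ω | ζ₂ ω = i} = ENNReal.ofReal (μ i))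
    (Δ : ℕ) (i : ℕ) (hi : 1 ≤ i) :
    P {ω | max (ζ₁ ω) (Δ + ζ₂ ω) = Δ + i}
      = ENNReal.ofReal (μ (i + Δ) * ∑ j ∈ Finset.Icc 1 (i - 1), μ j
          + μ i * ∑ j ∈ Finset.Icc 1 (i - 1 + Δ), μ j
          + μ i * μ (i + Δ)) := by
  classical
  have key : ∀ (A B : Set ℕ), P (ζ₁ ⁻¹' A ∩ ζ₂ ⁻¹' B) = P (ζ₁ ⁻¹' A) * P (ζ₂ ⁻¹' B) :=
    fun A B => hindep.measure_inter_preimage_eq_mul A B MeasurableSet.of_discrete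
      MeasurableSet.of_discrete
  have hset : {ω | max (ζ₁ ω) (Δ + ζ₂ ω) = Δ + i}
      = ((ζ₁ ⁻¹' {Δ + i} ∩ ζ₂ ⁻¹' Set.Iio i)
        ∪ (ζ₁ ⁻¹' Set.Iio (Δ + i) ∩ ζ₂ ⁻¹' {i}))
        ∪ (ζ₁ ⁻¹' {Δ + i} ∩ ζ₂ ⁻¹' {i}) := by
    ext ω
    simp only [Set.mem_setOf_eq, Set.mem_union, Set.mem_inter_iff, Set.mem_preimage,
      Set.mem_singleton_iff, Set.mem_Iio]
    omega
  have hmeas : ∀ (A B : Set ℕ), MeasurableSet (ζ₁ ⁻¹' A ∩ ζ₂ ⁻¹' B) := fun A B =>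
    (hm1 MeasurableSet.of_discrete).inter (hm2 MeasurableSet.of_discrete)
  have hd1 : Disjoint (ζ₁ ⁻¹' {Δ + i} ∩ ζ₂ ⁻¹' Set.Iio i)
      (ζ₁ ⁻¹' Set.Iio (Δ + i) ∩ ζ₂ ⁻¹' {i}) := by
    rw [Set.disjoint_left]
    rintro ω ⟨h1, h2⟩ ⟨h3, h4⟩
    simp only [Set.mem_preimage, Set.mem_singleton_iff, Set.mem_Iio] at *
    omega
  have hd2 : Disjoint ((ζ₁ ⁻¹' {Δ + i} ∩ ζ₂ ⁻¹' Set.Iio i)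
        ∪ (ζ₁ ⁻¹' Set.Iio (Δ + i) ∩ ζ₂ ⁻¹' {i}))
      (ζ₁ ⁻¹' {Δ + i} ∩ ζ₂ ⁻¹' {i}) := by
    rw [Set.disjoint_left]
    rintro ω (⟨h1, h2⟩ | ⟨h1, h2⟩) ⟨h3, h4⟩ <;>
      simp only [Set.mem_preimage, Set.mem_singleton_iff, Set.mem_Iio] at * <;> omega
  have hsingle1 : ∀ k, P (ζ₁ ⁻¹' {k}) = ENNReal.ofReal (μ k) := fun k => hlaw1 k
  have hsingle2 : ∀ k, P (ζ₂ ⁻¹' {k}) = ENNReal.ofReal (μ k) := fun k => hlaw2 k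
  have hrange : ∀ n, 1 ≤ n → Finset.range n = insert 0 (Finset.Icc 1 (n - 1)) := by
    intro n hn
    ext j
    simp only [Finset.mem_range, Finset.mem_insert, Finset.mem_Icc]
    omega
  have hIio : ∀ (ζ : Ω → ℕ), Measurable ζ →
      (∀ k : ℕ, P {ω | ζ ω = k} = ENNReal.ofReal (μ k)) → ∀ n, 1 ≤ n →
      P (ζ ⁻¹' Set.Iio n) = ENNReal.ofReal (∑ j ∈ Finset.Icc 1 (n - 1), μ j) := by
    intro ζ hζ hlaw n hn
    have : (ζ ⁻¹' Set.Iio n) = {ω | ζ ω < n} := rfl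
    rw [this, lt_measure P μ ζ hζ hlaw n,
      ← ENNReal.ofReal_sum_of_nonneg (fun j _ => hnn j), hrange n hn,
      Finset.sum_insert (by simp), h0, zero_add]
  rw [hset, measure_union hd2 (hmeas _ _), measure_union hd1 (hmeas _ _),
    key, key, key]
  simp only [hsingle1, hsingle2, hIio ζ₂ hm2 hlaw2 i hi,
    hIio ζ₁ hm1 hlaw1 (Δ + i) (by omega : 1 ≤ Δ + i)]
  rw [show Δ + i - 1 = i - 1 + Δ from by omega, show Δ + i = i + Δ from Nat.add_comm Δ i,
    ← ENNReal.ofReal_mul (hnn (i + Δ)),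
    ← ENNReal.ofReal_mul (Finset.sum_nonneg fun j _ => hnn j),
    ← ENNReal.ofReal_mul (hnn (i + Δ)),
    ← ENNReal.ofReal_add (mul_nonneg (hnn _) (Finset.sum_nonneg fun j _ => hnn j))
      (mul_nonneg (Finset.sum_nonneg fun j _ => hnn j) (hnn _)),
    ← ENNReal.ofReal_add (add_nonneg (mul_nonneg (hnn _) (Finset.sum_nonneg fun j _ => hnn j))
      (mul_nonneg (Finset.sum_nonneg fun j _ => hnn j) (hnn _)))
      (mul_nonneg (hnn _) (hnn _))]
  congr 1
  ring
end
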